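/- arXiv:1510.06233 — 2 statements merged into one kernel-verified Lean document; each statement's English description precedes it below -/
import Mathlib

section
/- Let (R, d) be a minimal divisive meadow, i.e., the only subring of R closed under d (x, y ∈ S implies d x y ∈ S) is R itself. Then R is finite if and only if there exist polynomials f, g ∈ ℤ[X] such that for all x ∈ R, 1 + d 1 x = d (f̄(x)) (ḡ(x)), where f̄ and ḡ denote the images of f and g in R[X]. In other words, a minimal divisive meadow admits transformation into simple fractions if and only if it is finite. -/
/-!
In a divisive meadow `y = y ^ (k + 1) * (d 1 y) ^ k`, so a repetition `y ^ a = y ^ (a + p)`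
among the powers of `y` forces `y ^ (p + 1) = y`, and then `d 1 y = y ^ (2 * p - 1)`. In a finite
ring the period `p` can be chosen uniformly, and `1 + d 1 x = d (1 + x ^ (2 * p - 1)) 1`.

Conversely, in positive characteristic the prime subring is finite, so it is closed under `d`
and by minimality equals `R`. In characteristic zero, a prime `P` avoiding the positive integers
gives a ring map from `R` to the characteristic-zero field `Frac (R ⧸ P)` turning `d` into
division. There `1 + 1 / n = f(n) / g(n)` for all `n ≥ 1` forces `(X + 1) g = X f`, so
`g(0) = 0` and the identity fails at `x = 0`.
-/

open Polynomial

theorem exists_pow_eq_pow_add (M : Type*) [Monoid M] [Finite M] :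
    ∃ a p : ℕ, 0 < p ∧ ∀ x : M, x ^ a = x ^ (a + p) := by
  obtain ⟨m, n, hmn, h⟩ := Finite.exists_ne_map_eq_of_infinite fun k : ℕ => fun x : M => x ^ k
  rcases Nat.lt_or_gt_of_ne hmn with hlt | hlt
  · exact ⟨m, n - m, by omega, fun x => by rw [Nat.add_sub_cancel' hlt.le]; exact congrFun h x⟩
  · exact ⟨n, m - n, by omega, fun x => by
      rw [Nat.add_sub_cancel' hlt.le]; exact (congrFun h x).symm⟩

theorem Subring.finite_bot_of_ringChar_ne_zero {R : Type*} [CommRing R] (h : ringChar R ≠ 0) :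
    ((⊥ : Subring R) : Set R).Finite := by
  have : NeZero (ringChar R) := ⟨h⟩
  refine (Set.finite_range (ZMod.cast : ZMod (ringChar R) → R)).subset ?_
  rintro x hx
  obtain ⟨k, rfl⟩ := Subring.mem_bot.mp hx
  exact ⟨k, ZMod.cast_intCast' k⟩

theorem Ideal.exists_isPrime_charZero_quotient (R : Type*) [CommRing R] [CharZero R] :
    ∃ P : Ideal R, P.IsPrime ∧ CharZero (R ⧸ P) := by
  let S := (nonZeroDivisors ℕ).map (Nat.castRingHom R)
  have hS : ∀ n : ℕ, n ≠ 0 → (n : R) ∈ S := fun n hn =>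
    ⟨n, mem_nonZeroDivisors_iff_ne_zero.mpr hn, rfl⟩
  have hdisj : Disjoint ((⊥ : Ideal R) : Set R) S := by
    rw [Set.disjoint_left]
    rintro _ hx ⟨n, hn, rfl⟩
    exact mem_nonZeroDivisors_iff_ne_zero.mp hn (by simpa using hx)
  obtain ⟨P, hP, -, hPS⟩ := Ideal.exists_le_prime_disjoint ⊥ S hdisj
  refine ⟨P, hP, charZero_of_inj_zero fun n hn => ?_⟩
  by_contra hn0
  rw [← map_natCast (Ideal.Quotient.mk P), Ideal.Quotient.eq_zero_iff_mem] at hn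
  exact Set.disjoint_left.mp hPS hn (hS n hn0)

theorem Polynomial.not_forall_one_add_inv_eq_div {K : Type*} [Field K] [CharZero K] (F G : K[X]) :
    ¬ ∀ n : ℕ, 1 + (n : K)⁻¹ = F.eval (n : K) / G.eval (n : K) := by
  intro h
  have hpoly : (X + 1) * G = X * F := by
    rw [← sub_eq_zero]
    refine eq_zero_of_infinite_isRoot _ <| Set.infinite_of_injective_forall_mem
      (f := fun n : ℕ => ((n + 1 : ℕ) : K)) (Nat.cast_injective.comp (add_left_injective 1)) ?_
    intro n
    have hn1 : ((n + 1 : ℕ) : K) + 1 ≠ 0 := by exact_mod_cast (n + 1).succ_ne_zero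
    have hfrac := h (n + 1)
    have hG : G.eval ((n + 1 : ℕ) : K) ≠ 0 := by
      intro hG
      rw [hG, div_zero] at hfrac
      field_simp at hfrac
      exact hn1 (by linear_combination hfrac)
    field_simp at hfrac
    simp only [Set.mem_ofPred_eq, IsRoot, eval_sub, eval_mul, eval_add, eval_X, eval_one]
    linear_combination hfrac
  have hG0 : G.eval 0 = 0 := by simpa using congrArg (eval 0) hpoly
  simpa [hG0] using h 0

structure IsDivisiveMeadow {R : Type*} [CommRing R] (d : R → R → R) : Prop where
  inv_inv : ∀ x, d 1 (d 1 x) = x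
  div_mul_self_self : ∀ x, d (x * x) x = x
  div_eq_mul_inv : ∀ x y, d x y = x * d 1 y

def OneAddInvIsSimpleFraction {R : Type*} [CommRing R] (d : R → R → R) : Prop :=
  ∃ f g : ℤ[X], ∀ x : R,
    1 + d 1 x = d (f.eval₂ (Int.castRingHom R) x) (g.eval₂ (Int.castRingHom R) x)

namespace IsDivisiveMeadow

variable {R : Type*} [CommRing R] {d : R → R → R}

theorem mul_mul_inv (hd : IsDivisiveMeadow d) (x : R) : x * x * d 1 x = x := by
  rw [← hd.div_eq_mul_inv]
  exact hd.div_mul_self_self x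

theorem inv_mul_inv_mul (hd : IsDivisiveMeadow d) (x : R) : d 1 x * d 1 x * x = d 1 x := by
  simpa only [hd.inv_inv] using hd.mul_mul_inv (d 1 x)

theorem pow_succ_mul_inv_pow (hd : IsDivisiveMeadow d) (x : R) (k : ℕ) :
    x ^ (k + 1) * d 1 x ^ k = x := by
  induction k with
  | zero => simp
  | succ k ih =>
    calc x ^ (k + 1 + 1) * d 1 x ^ (k + 1) = x ^ (k + 1) * d 1 x ^ k * x * d 1 x := by ring
      _ = x := by rw [ih, hd.mul_mul_inv]

theorem pow_succ_eq_self_of_pow_eq_pow_add (hd : IsDivisiveMeadow d) {y : R} {a p : ℕ}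
    (h : y ^ a = y ^ (a + p)) : y ^ (p + 1) = y :=
  calc y ^ (p + 1) = y ^ p * (y ^ (a + 1) * d 1 y ^ a) := by rw [hd.pow_succ_mul_inv_pow]; ring
    _ = y * y ^ (a + p) * d 1 y ^ a := by ring
    _ = y := by rw [← h, ← pow_succ', hd.pow_succ_mul_inv_pow]

theorem inv_eq_pow_of_pow_succ_eq_self (hd : IsDivisiveMeadow d) {y : R} {p : ℕ} (hp : 0 < p)
    (h : y ^ (p + 1) = y) : d 1 y = y ^ (2 * p - 1) := by
  obtain ⟨q, rfl⟩ : ∃ q, p = q + 1 := ⟨p - 1, by omega⟩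
  have hy : y ^ (2 * q + 3) = y :=
    calc y ^ (2 * q + 3) = y ^ (q + 1 + 1) * y ^ (q + 1) := by ring
      _ = y := by rw [h, ← pow_succ', h]
  calc d 1 y = d 1 y * d 1 y * y := (hd.inv_mul_inv_mul y).symm
    _ = d 1 y * d 1 y * y ^ (2 * q + 3) := by rw [hy]
    _ = (y * y * d 1 y) * y * d 1 y * y ^ (2 * q) := by ring
    _ = y ^ (2 * (q + 1) - 1) := by
      rw [hd.mul_mul_inv, hd.mul_mul_inv, show 2 * (q + 1) - 1 = 2 * q + 1 by omega]; ring

theorem exists_forall_inv_eq_pow (hd : IsDivisiveMeadow d) [Finite R] :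
    ∃ n : ℕ, ∀ x : R, d 1 x = x ^ n := by
  obtain ⟨a, p, hp, h⟩ := exists_pow_eq_pow_add R
  exact ⟨2 * p - 1, fun x =>
    hd.inv_eq_pow_of_pow_succ_eq_self hp (hd.pow_succ_eq_self_of_pow_eq_pow_add (h x))⟩

theorem div_mem_of_finite (hd : IsDivisiveMeadow d) (S : Subring R) [Finite S] {x y : R}
    (hx : x ∈ S) (hy : y ∈ S) : d x y ∈ S := by
  obtain ⟨a, p, hp, h⟩ := exists_pow_eq_pow_add S
  have hpow : y ^ a = y ^ (a + p) := congrArg Subtype.val (h ⟨y, hy⟩)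
  rw [hd.div_eq_mul_inv, hd.inv_eq_pow_of_pow_succ_eq_self hp
    (hd.pow_succ_eq_self_of_pow_eq_pow_add hpow)]
  exact mul_mem hx (pow_mem hy _)

theorem map_inv {K : Type*} [DivisionRing K] (hd : IsDivisiveMeadow d) (π : R →+* K) (x : R) :
    π (d 1 x) = (π x)⁻¹ := by
  by_cases hx : π x = 0
  · rw [hx, inv_zero, ← hd.inv_mul_inv_mul x, map_mul, hx, mul_zero]
  · refine (inv_eq_of_mul_eq_one_right (mul_left_cancel₀ hx ?_)).symm
    rw [← mul_assoc, ← map_mul, ← map_mul, hd.mul_mul_inv, mul_one]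

theorem map_div {K : Type*} [DivisionRing K] (hd : IsDivisiveMeadow d) (π : R →+* K) (x y : R) :
    π (d x y) = π x / π y := by
  rw [hd.div_eq_mul_inv, map_mul, hd.map_inv, _root_.div_eq_mul_inv]

theorem oneAddInvIsSimpleFraction_of_finite (hd : IsDivisiveMeadow d) [Finite R] :
    OneAddInvIsSimpleFraction d := by
  obtain ⟨n, hn⟩ := hd.exists_forall_inv_eq_pow
  refine ⟨1 + X ^ n, 1, fun x => ?_⟩
  rw [hn, hd.div_eq_mul_inv, hn]
  simp

theorem not_oneAddInvIsSimpleFraction [CharZero R] (hd : IsDivisiveMeadow d) :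
    ¬ OneAddInvIsSimpleFraction d := by
  rintro ⟨f, g, hfg⟩
  obtain ⟨P, hP, hchar⟩ := Ideal.exists_isPrime_charZero_quotient R
  let K := FractionRing (R ⧸ P)
  let π : R →+* K := (algebraMap (R ⧸ P) K).comp (Ideal.Quotient.mk P)
  have heval (p : ℤ[X]) (x : R) :
      π (p.eval₂ (Int.castRingHom R) x) = (p.map (Int.castRingHom K)).eval (π x) := by
    rw [hom_eval₂, eval_map, RingHom.ext_int (π.comp _) (Int.castRingHom K)]
  refine not_forall_one_add_inv_eq_div (f.map (Int.castRingHom K)) (g.map (Int.castRingHom K))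
    fun n => ?_
  simpa [heval, hd.map_div, hd.map_inv] using congrArg π (hfg n)

end IsDivisiveMeadow

theorem minimal_meadow_simple_fractions_iff_finite {R : Type*} [CommRing R]
    (d : R → R → R)
    (h1 : ∀ x : R, d 1 (d 1 x) = x) (h2 : ∀ x : R, d (x * x) x = x)
    (h3 : ∀ x y : R, d x y = x * d 1 y)
    (hmin : ∀ S : Subring R, (∀ x y : R, x ∈ S → y ∈ S → d x y ∈ S) → S = ⊤) :
    Finite R ↔
      ∃ f g : Polynomial ℤ, ∀ x : R,
        1 + d 1 x =
          d (Polynomial.eval₂ (Int.castRingHom R) x f)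
            (Polynomial.eval₂ (Int.castRingHom R) x g) := by
  have hd : IsDivisiveMeadow d := ⟨h1, h2, h3⟩
  refine ⟨fun _ => hd.oneAddInvIsSimpleFraction_of_finite, fun hfg => ?_⟩
  by_cases hR : CharZero R
  · exact absurd hfg hd.not_oneAddInvIsSimpleFraction
  have hfin :=
    Subring.finite_bot_of_ringChar_ne_zero (hR ∘ (CharP.ringChar_zero_iff_CharZero R).mp)
  have := hfin.to_subtype
  have hbot : (⊥ : Subring R) = ⊤ := hmin ⊥ fun x y hx hy => hd.div_mem_of_finite ⊥ hx hy
  rw [hbot, Subring.coe_top] at hfin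
  exact Set.finite_univ_iff.mp hfin
end

section
/- The equational axioms of divisive meadows are not ω-complete. Concretely: (a) for every divisive meadow (R, d) and every element a of the minimal divisive submeadow of R (i.e., a belongs to every subring of R closed under d), one has (1 − d (2 : R) (2 : R)) * (a^2 − a) = 0, so every closed substitution instance of the equation (1 − 2/2)·(x² − x) = 0 holds in every divisive meadow; yet (b) the equation itself fails in some divisive meadow: in the field GF(4) (GaloisField 2 2 with its zero-totalized division, where 2 = 0 and hence 2/2 = 0) there exists an element x with (1 − (2 : GF(4))/(2 : GF(4))) * (x^2 − x) ≠ 0. -/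
/-!
Write `e := 1 - 2/2`. The axioms make `e` an idempotent with `2 e = 0`, so the elements `x` for
which `e x` is idempotent form a subring: in the corner ring `eR` the idempotents are closed under
addition because `eR` has characteristic two. This subring is closed under division, since
`e x` idempotent forces `e (1/x) = e x`. Hence it contains the minimal submeadow, and on it
`e (x² - x) = (e x)² - e x = 0`. In `GF(4)` on the other hand `e = 1`, while only `0` and `1` are
idempotent.
-/

structure IsDivisiveMeadow_s19 {R : Type*} [CommRing R] (d : R → R → R) : Prop where
  inv_inv : ∀ x, d 1 (d 1 x) = x
  mul_self_div_self : ∀ x, d (x * x) x = x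
  div_eq_mul_inv : ∀ x y, d x y = x * d 1 y

def Subring.ofCornerIdempotents {R : Type*} [CommRing R] {e : R} (he : IsIdempotentElem e)
    (h2 : 2 * e = 0) : Subring R where
  carrier := {x | IsIdempotentElem (e * x)}
  zero_mem' := by simp [Set.mem_ofPred_eq, IsIdempotentElem.zero]
  one_mem' := by simpa only [Set.mem_ofPred_eq, mul_one] using he
  add_mem' {x y} hx hy := by
    simp only [Set.mem_ofPred_eq, mul_add] at hx hy ⊢
    refine hx.add hy ?_
    linear_combination (2 * x * y) * he.eq + (x * y) * h2
  mul_mem' {x y} hx hy := by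
    simp only [Set.mem_ofPred_eq] at hx hy ⊢
    have hmul : e * (x * y) = e * x * (e * y) := by linear_combination (-(x * y)) * he.eq
    rw [hmul]
    exact hx.mul hy
  neg_mem' {x} hx := by
    simp only [Set.mem_ofPred_eq] at hx ⊢
    have hneg : e * -x = e * x := by linear_combination (-x) * h2
    rwa [hneg]

theorem Subring.mem_ofCornerIdempotents {R : Type*} [CommRing R] {e : R}
    (he : IsIdempotentElem e) (h2 : 2 * e = 0) {x : R} :
    x ∈ Subring.ofCornerIdempotents he h2 ↔ IsIdempotentElem (e * x) :=
  Iff.rfl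

namespace IsDivisiveMeadow_s19

variable {R : Type*} [CommRing R] {d : R → R → R}

theorem mul_mul_inv_self (hd : IsDivisiveMeadow_s19 d) (x : R) : x * x * d 1 x = x := by
  simpa only [hd.div_eq_mul_inv (x * x)] using hd.mul_self_div_self x

theorem inv_mul_inv_mul_self (hd : IsDivisiveMeadow_s19 d) (x : R) : d 1 x * d 1 x * x = d 1 x := by
  simpa only [hd.inv_inv] using hd.mul_mul_inv_self (d 1 x)

theorem isIdempotentElem_one_sub_div_two_two (hd : IsDivisiveMeadow_s19 d) :
    IsIdempotentElem (1 - d 2 2) := by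
  refine IsIdempotentElem.one_sub ?_
  rw [hd.div_eq_mul_inv, IsIdempotentElem]
  linear_combination d 1 2 * hd.mul_mul_inv_self 2

theorem two_mul_one_sub_div_two_two (hd : IsDivisiveMeadow_s19 d) : 2 * (1 - d 2 2) = 0 := by
  rw [hd.div_eq_mul_inv]
  linear_combination -hd.mul_mul_inv_self 2

/-- With `u = e y` and `v = e (1/y)`: from `u² v = u`, `v² u = v` and `u² = u` one gets
`u = u v = v`. -/
theorem mul_inv_eq_mul_of_isIdempotentElem (hd : IsDivisiveMeadow_s19 d) {e y : R}
    (he : IsIdempotentElem e) (hy : IsIdempotentElem (e * y)) : e * d 1 y = e * y := by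
  have hu : e * y * (e * y) * (e * d 1 y) = e * y := by
    linear_combination (y * y * d 1 y * (e + 1)) * he.eq + e * hd.mul_mul_inv_self y
  have hv : e * d 1 y * (e * d 1 y) * (e * y) = e * d 1 y := by
    linear_combination (d 1 y * d 1 y * y * (e + 1)) * he.eq + e * hd.inv_mul_inv_mul_self y
  rw [hy.eq] at hu
  linear_combination (e * d 1 y + 1) * hu - hv

theorem div_mem_ofCornerIdempotents (hd : IsDivisiveMeadow_s19 d) {e : R}
    (he : IsIdempotentElem e) (h2 : 2 * e = 0) {x y : R}
    (hx : x ∈ Subring.ofCornerIdempotents he h2) (hy : y ∈ Subring.ofCornerIdempotents he h2) :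
    d x y ∈ Subring.ofCornerIdempotents he h2 := by
  rw [Subring.mem_ofCornerIdempotents] at hx hy ⊢
  have hxy : e * d x y = e * x * (e * d 1 y) := by
    rw [hd.div_eq_mul_inv]
    linear_combination (-(x * d 1 y)) * he.eq
  rw [hxy, hd.mul_inv_eq_mul_of_isIdempotentElem he hy]
  exact hx.mul hy

theorem one_sub_div_two_two_mul_sq_sub_self (hd : IsDivisiveMeadow_s19 d) {a : R}
    (ha : ∀ S : Subring R, (∀ x y : R, x ∈ S → y ∈ S → d x y ∈ S) → a ∈ S) :
    (1 - d 2 2) * (a ^ 2 - a) = 0 := by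
  have he := hd.isIdempotentElem_one_sub_div_two_two
  have h2 := hd.two_mul_one_sub_div_two_two
  have hea : IsIdempotentElem ((1 - d 2 2) * a) :=
    ha _ fun _ _ ↦ hd.div_mem_ofCornerIdempotents he h2
  linear_combination (-(a * a)) * he.eq + hea.eq

end IsDivisiveMeadow_s19

theorem exists_sq_sub_self_ne_zero {K : Type*} [Ring K] [IsDomain K] (hK : 2 < Nat.card K) :
    ∃ x : K, x ^ 2 - x ≠ 0 := by
  by_contra! h
  have hsurj : Function.Surjective fun b : Bool ↦ if b then (1 : K) else 0 := by
    intro x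
    have hx : IsIdempotentElem x := by
      rw [IsIdempotentElem, ← sq]
      exact sub_eq_zero.mp (h x)
    rcases IsIdempotentElem.iff_eq_zero_or_one.mp hx with hx | hx
    · exact ⟨false, hx.symm⟩
    · exact ⟨true, hx.symm⟩
  have := Nat.card_le_card_of_surjective _ hsurj
  simp only [Nat.card_eq_fintype_card, Fintype.card_bool] at this
  omega

theorem divisive_meadow_axioms_not_omega_complete :
    (∀ (R : Type) [CommRing R] (d : R → R → R),
        (∀ x : R, d 1 (d 1 x) = x) → (∀ x : R, d (x * x) x = x) →
        (∀ x y : R, d x y = x * d 1 y) →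
        ∀ a : R,
          (∀ S : Subring R, (∀ x y : R, x ∈ S → y ∈ S → d x y ∈ S) → a ∈ S) →
          (1 - d 2 2) * (a ^ 2 - a) = 0) ∧
      (∃ x : GaloisField 2 2,
        (1 - (2 : GaloisField 2 2) / (2 : GaloisField 2 2)) * (x ^ 2 - x) ≠ 0) := by
  refine ⟨fun R _ d h1 h2 h3 a ha ↦
    (IsDivisiveMeadow_s19.mk h1 h2 h3).one_sub_div_two_two_mul_sq_sub_self ha, ?_⟩
  have hcard : 2 < Nat.card (GaloisField 2 2) := by
    rw [GaloisField.card 2 2 two_ne_zero]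
    norm_num
  simpa only [CharTwo.two_eq_zero, div_zero, sub_zero, one_mul] using
    exists_sq_sub_self_ne_zero hcard
end
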